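/- Let χ be a primitive Dirichlet character modulo q and h an integer. Then Σ_{x mod q, gcd(x,q)=1} χ(x+h) conj(χ)(x) = S(h, 0; q), the Ramanujan sum Σ_{r mod q, gcd(r,q)=1} e_q(hr). -/

import Mathlib

/-! Let `τ` be the Gauss sum of `χ⁻¹ = χ̄`, which is again primitive. Primitivity gives
`χ m * τ = ∑ y, χ̄ y * e (m * y)` for every residue `m`, unit or not. Expanding `χ (x + h)` in this
way and summing over `x` first, the inner sum `∑ x, χ̄ x * e (x * y)` is again `χ y * τ`, so the
left side times `τ` is `∑ y, χ̄ y * χ y * e (h * y) * τ`, the Ramanujan sum times `τ`. Finally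
`τ ≠ 0`, since otherwise the Fourier transform of `χ` would vanish identically. -/

open Complex Finset DirichletCharacter

lemma MulChar.sum_units_mul {M R : Type*} [CommMonoid M] [Fintype M] [Fintype Mˣ] [CommRing R]
    (χ : MulChar M R) (f : M → R) : ∑ u : Mˣ, χ u * f u = ∑ x, χ x * f x :=
  Fintype.sum_of_injective _ Units.val_injective _ _
    (fun _ hx ↦ by rw [χ.map_nonunit hx, zero_mul]) fun _ ↦ rfl

namespace DirichletCharacter

variable {N : ℕ}

lemma IsPrimitive.inv {R : Type*} [CommRing R] {χ : DirichletCharacter R N}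
    (hχ : χ.IsPrimitive) : χ⁻¹.IsPrimitive := by
  rwa [isPrimitive_def, conductor_inv]

variable [NeZero N]

open ZMod in
lemma IsPrimitive.gaussSum_stdAddChar_ne_zero {χ : DirichletCharacter ℂ N}
    (hχ : χ.IsPrimitive) : gaussSum χ stdAddChar ≠ 0 := by
  intro hτ
  have hdft : 𝓕 (χ : ZMod N → ℂ) = 0 := funext fun k ↦ by
    rw [hχ.fourierTransform_eq_inv_mul_gaussSum, hτ, mul_zero, Pi.zero_apply]
  have := congrFun (dft_dft (χ : ZMod N → ℂ)) (-1)
  simp only [hdft, dft_apply, Pi.zero_apply, smul_eq_mul, mul_zero, sum_const_zero, neg_neg,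
    map_one, mul_one] at this
  exact NeZero.ne (N : ℂ) this.symm

lemma IsPrimitive.mul_gaussSum_inv {R : Type*} [CommRing R] [IsDomain R]
    {χ : DirichletCharacter R N} (hχ : χ.IsPrimitive) (e : AddChar (ZMod N) R) (m : ZMod N) :
    χ m * gaussSum χ⁻¹ e = ∑ y, χ⁻¹ y * e (m * y) := by
  simpa only [inv_inv, gaussSum, AddChar.mulShift_apply] using
    (gaussSum_mulShift_of_isPrimitive e hχ.inv m).symm

lemma IsPrimitive.sum_shift_mul_inv_mul_gaussSum {R : Type*} [CommRing R] [IsDomain R]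
    {χ : DirichletCharacter R N} (hχ : χ.IsPrimitive) (e : AddChar (ZMod N) R) (h : ZMod N) :
    (∑ x : (ZMod N)ˣ, χ (x + h) * χ⁻¹ x) * gaussSum χ⁻¹ e
      = (∑ r : (ZMod N)ˣ, e (h * r)) * gaussSum χ⁻¹ e := by
  set τ := gaussSum χ⁻¹ e
  have expand (m : ZMod N) : χ m * τ = ∑ y, χ⁻¹ y * e (m * y) := hχ.mul_gaussSum_inv e m
  have hunit (u : (ZMod N)ˣ) : χ⁻¹ u * χ u = 1 := by
    rw [← Pi.mul_apply, ← MulChar.coeToFun_mul, inv_mul_cancel, MulChar.one_apply_coe]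
  calc (∑ x : (ZMod N)ˣ, χ (x + h) * χ⁻¹ x) * τ
      = ∑ x, χ⁻¹ x * (χ (x + h) * τ) := by
        rw [sum_mul, ← MulChar.sum_units_mul]
        exact sum_congr rfl fun x _ ↦ by ring
    _ = ∑ x, χ⁻¹ x * ∑ y, χ⁻¹ y * e ((x + h) * y) := by
        simp only [expand]
    _ = ∑ y, χ⁻¹ y * (e (h * y) * ∑ x, χ⁻¹ x * e (y * x)) := by
        simp only [mul_sum]
        rw [sum_comm]
        refine sum_congr rfl fun y _ ↦ sum_congr rfl fun x _ ↦ ?_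
        rw [add_mul, AddChar.map_add_eq_mul, mul_comm x y]
        ring
    _ = ∑ y, χ⁻¹ y * (e (h * y) * (χ y * τ)) := by
        simp only [expand]
    _ = (∑ r : (ZMod N)ˣ, e (h * r)) * τ := by
        rw [← MulChar.sum_units_mul, sum_mul]
        refine sum_congr rfl fun r _ ↦ ?_
        linear_combination (e (h * r) * τ) * hunit r

end DirichletCharacter

/-- For a primitive Dirichlet character `χ` mod `q` and integer `h`,
`Σ_{x mod q, (x,q)=1} χ(x+h) conj(χ)(x)` equals the Ramanujan sum
`S(h,0;q) = Σ_{r mod q, (r,q)=1} e_q(hr)`. -/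
theorem stmt_15 (q : ℕ) [NeZero q] (χ : DirichletCharacter ℂ q)
    (hprim : χ.IsPrimitive) (h : ℤ) :
    (∑ x : (ZMod q)ˣ, χ ((x : ZMod q) + (h : ZMod q)) * (starRingEnd ℂ) (χ (x : ZMod q)))
      = ∑ r : (ZMod q)ˣ,
          Complex.exp (2 * Real.pi * Complex.I *
            ((((h : ZMod q) * (r : ZMod q)).val : ℕ) : ℂ) / (q : ℂ)) := by
  have hconj (x : ZMod q) : starRingEnd ℂ (χ x) = χ⁻¹ x := χ.star_apply' x
  have hexp (j : ZMod q) : exp (2 * Real.pi * I * (j.val : ℂ) / q) = ZMod.stdAddChar j := by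
    rw [ZMod.stdAddChar_apply, ZMod.toCircle_apply]
  simp only [hconj, hexp]
  exact mul_right_cancel₀ hprim.inv.gaussSum_stdAddChar_ne_zero
    (hprim.sum_shift_mul_inv_mul_gaussSum _ _)
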